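/- Let e be a lower arc with center c and endpoints p₁, p₂. Then for every x ∈ [p₁_x − 1, p₂_x + 1], at least one of |x − p₁_x| ≤ 1 or |x − p₂_x| ≤ 1 holds, and for every s ∈ e with |x − s_x| ≤ 1 one has f_s(x) ≤ max{f_{p₁}(x), f_{p₂}(x)} (where a term is omitted if x lies outside the corresponding domain), with equality attained when s is a suitable endpoint. Hence the upper boundary of the Minkowski sum of e with the closed unit disc is the upper envelope of the upper unit semicircles of the two endpoints p₁ and p₂. -/
import Mathlib


noncomputable section

/-- The plane. -/
abbrev E2 := EuclideanSpace ℝ (Fin 2)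

/-- The function whose graph (on `[p_x - 1, p_x + 1]`) is the upper unit
semicircle of `p`. -/
def fup (p : E2) (x : ℝ) : ℝ := p 1 + Real.sqrt (1 - (x - p 0) ^ 2)

/-- A lower circular arc of unit radius: center `c`, endpoints `p₁, p₂` on the
unit circle around `c`, both not above `c`, with `p₁` strictly left of `p₂`. -/
structure LowerArc where
  c : E2
  p₁ : E2
  p₂ : E2
  h₁ : ‖p₁ - c‖ = 1
  h₂ : ‖p₂ - c‖ = 1
  hy₁ : p₁ 1 ≤ c 1
  hy₂ : p₂ 1 ≤ c 1
  hx : p₁ 0 < p₂ 0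

/-- The set of points of a lower arc. -/
def LowerArc.pts (e : LowerArc) : Set E2 :=
  {p | ‖p - e.c‖ = 1 ∧ e.p₁ 0 ≤ p 0 ∧ p 0 ≤ e.p₂ 0 ∧ p 1 ≤ e.c 1}

lemma norm_sq_aux (p c : E2) (h : ‖p - c‖ = 1) :
    (p 0 - c 0) ^ 2 + (p 1 - c 1) ^ 2 = 1 := by
  have h2 : ‖p - c‖ ^ 2 = 1 := by rw [h]; norm_num
  rw [EuclideanSpace.norm_eq] at h2
  rw [Real.sq_sqrt (by positivity)] at h2
  simpa [Fin.sum_univ_two, Real.norm_eq_abs, sq_abs] using h2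

lemma vert_aux (p c : E2) (h : ‖p - c‖ = 1) (hy : p 1 ≤ c 1) :
    p 1 = c 1 - Real.sqrt (1 - (p 0 - c 0) ^ 2) := by
  have hn := norm_sq_aux p c h
  have : c 1 - p 1 = Real.sqrt ((c 1 - p 1) ^ 2) := (Real.sqrt_sq (by linarith)).symm
  have h2 : (c 1 - p 1) ^ 2 = 1 - (p 0 - c 0) ^ 2 := by nlinarith
  rw [h2] at this
  linarith

lemma hpoly_lemma (y u v : ℝ) (hy : 0 ≤ y) (huv : u ≤ v) (hu : u ^ 2 ≤ 1) (hv : v ^ 2 ≤ 1)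
    (hyu1 : -1 ≤ y - u) (hyu2 : y - u ≤ 1) (hyv1 : -1 ≤ y - v) (hyv2 : y - v ≤ 1) :
    (1 - (y - u) ^ 2) * (1 - v ^ 2) ≤ (1 - (y - v) ^ 2) * (1 - u ^ 2) := by
  have hu1 : u ≤ 1 := by nlinarith
  have hv1 : v ≤ 1 := by nlinarith
  have hfac : 0 ≤ 2 - y * (u + v) + 2 * (u * v) := by
    rcases le_total 0 (u + v) with h | h
    · nlinarith [mul_nonneg (sub_nonneg.mpr hu1) (sub_nonneg.mpr hv1),
        mul_nonneg h (show 0 ≤ u + 1 - y by linarith)]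
    · nlinarith [mul_nonneg hy (neg_nonneg.mpr h), sq_nonneg (u + v)]
  have hid : (1 - (y - v) ^ 2) * (1 - u ^ 2) - (1 - (y - u) ^ 2) * (1 - v ^ 2) =
      y * (v - u) * (2 - y * (u + v) + 2 * (u * v)) := by ring
  have hprod : 0 ≤ y * (v - u) * (2 - y * (u + v) + 2 * (u * v)) :=
    mul_nonneg (mul_nonneg hy (sub_nonneg.mpr huv)) hfac
  linarith

lemma key (y u v : ℝ) (hy : 0 ≤ y) (huv : u ≤ v) (hu : u ^ 2 ≤ 1) (hv : v ^ 2 ≤ 1)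
    (hyu : |y - u| ≤ 1) (hyv : |y - v| ≤ 1) :
    Real.sqrt (1 - (y - u) ^ 2) - Real.sqrt (1 - u ^ 2) ≤
      Real.sqrt (1 - (y - v) ^ 2) - Real.sqrt (1 - v ^ 2) := by
  obtain ⟨hyu1, hyu2⟩ := abs_le.mp hyu
  obtain ⟨hyv1, hyv2⟩ := abs_le.mp hyv
  have ha0 : (0:ℝ) ≤ 1 - (y - u) ^ 2 := by nlinarith
  have hb0 : (0:ℝ) ≤ 1 - v ^ 2 := by linarith
  have hc0 : (0:ℝ) ≤ 1 - (y - v) ^ 2 := by nlinarith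
  have hd0 : (0:ℝ) ≤ 1 - u ^ 2 := by linarith
  set a := Real.sqrt (1 - (y - u) ^ 2) with hadef
  set b := Real.sqrt (1 - v ^ 2) with hbdef
  set c := Real.sqrt (1 - (y - v) ^ 2) with hcdef
  set d := Real.sqrt (1 - u ^ 2) with hddef
  have ha2 : a ^ 2 = 1 - (y - u) ^ 2 := Real.sq_sqrt ha0
  have hb2 : b ^ 2 = 1 - v ^ 2 := Real.sq_sqrt hb0
  have hc2 : c ^ 2 = 1 - (y - v) ^ 2 := Real.sq_sqrt hc0
  have hd2 : d ^ 2 = 1 - u ^ 2 := Real.sq_sqrt hd0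
  have han : 0 ≤ a := Real.sqrt_nonneg _
  have hbn : 0 ≤ b := Real.sqrt_nonneg _
  have hcn : 0 ≤ c := Real.sqrt_nonneg _
  have hdn : 0 ≤ d := Real.sqrt_nonneg _
  have hpoly : (1 - (y - u) ^ 2) * (1 - v ^ 2) ≤ (1 - (y - v) ^ 2) * (1 - u ^ 2) :=
    hpoly_lemma y u v hy huv hu hv hyu1 hyu2 hyv1 hyv2
  have hsq : (a * b) ^ 2 ≤ (c * d) ^ 2 := by
    rw [mul_pow, mul_pow, ha2, hb2, hc2, hd2]; exact hpoly
  have hab : a * b ≤ c * d := by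
    calc a * b = Real.sqrt ((a * b) ^ 2) := (Real.sqrt_sq (mul_nonneg han hbn)).symm
    _ ≤ Real.sqrt ((c * d) ^ 2) := Real.sqrt_le_sqrt hsq
    _ = c * d := Real.sqrt_sq (mul_nonneg hcn hdn)
  have hsum : a + b ≤ c + d := by
    have h1 : (a + b) ^ 2 ≤ (c + d) ^ 2 := by nlinarith
    calc a + b = Real.sqrt ((a + b) ^ 2) := (Real.sqrt_sq (by linarith)).symm
    _ ≤ Real.sqrt ((c + d) ^ 2) := Real.sqrt_le_sqrt h1
    _ = c + d := Real.sqrt_sq (by linarith)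
  linarith

lemma key' (y u v : ℝ) (hy : y ≤ 0) (huv : v ≤ u) (hu : u ^ 2 ≤ 1) (hv : v ^ 2 ≤ 1)
    (hyu : |y - u| ≤ 1) (hyv : |y - v| ≤ 1) :
    Real.sqrt (1 - (y - u) ^ 2) - Real.sqrt (1 - u ^ 2) ≤
      Real.sqrt (1 - (y - v) ^ 2) - Real.sqrt (1 - v ^ 2) := by
  have h := key (-y) (-u) (-v) (by linarith) (by linarith)
    (by rw [neg_pow]; simpa using hu) (by rw [neg_pow]; simpa using hv)
    (by rw [show -y - -u = -(y - u) by ring, abs_neg]; exact hyu)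
    (by rw [show -y - -v = -(y - v) by ring, abs_neg]; exact hyv)
  rw [show -y - -u = -(y - u) by ring, show -y - -v = -(y - v) by ring] at h
  simpa only [neg_sq] using h

/-- The upper boundary of the Minkowski sum of a lower arc with the closed
unit disc is the upper envelope of the upper unit semicircles of the two
endpoints: on the domain `[p₁_x - 1, p₂_x + 1]`, at least one endpoint
semicircle is defined, every point of the arc contributes at most the value of
some defined endpoint semicircle, and the supremum is attained at an
endpoint. -/
theorem stmt_7 (e : LowerArc) :
    ∀ x ∈ Set.Icc (e.p₁ 0 - 1) (e.p₂ 0 + 1),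
      (|x - e.p₁ 0| ≤ 1 ∨ |x - e.p₂ 0| ≤ 1) ∧
      (∀ s ∈ e.pts, |x - s 0| ≤ 1 →
        ∃ p : E2, (p = e.p₁ ∨ p = e.p₂) ∧ |x - p 0| ≤ 1 ∧ fup s x ≤ fup p x) ∧
      (∃ p : E2, (p = e.p₁ ∨ p = e.p₂) ∧ p ∈ e.pts ∧ |x - p 0| ≤ 1 ∧
        ∀ s ∈ e.pts, |x - s 0| ≤ 1 → fup s x ≤ fup p x) := by
  intro x hx
  obtain ⟨hxl, hxr⟩ := hx
  have hn1 := norm_sq_aux e.p₁ e.c e.h₁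
  have hn2 := norm_sq_aux e.p₂ e.c e.h₂
  have hq1 : (e.p₁ 0 - e.c 0) ^ 2 ≤ 1 := by nlinarith [sq_nonneg (e.p₁ 1 - e.c 1)]
  have hq2 : (e.p₂ 0 - e.c 0) ^ 2 ≤ 1 := by nlinarith [sq_nonneg (e.p₂ 1 - e.c 1)]
  have hd1 : |e.p₁ 0 - e.c 0| ≤ 1 := by rw [abs_le]; constructor <;> nlinarith
  have hd2 : |e.p₂ 0 - e.c 0| ≤ 1 := by rw [abs_le]; constructor <;> nlinarith
  obtain ⟨hd1l, hd1r⟩ := abs_le.mp hd1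
  obtain ⟨hd2l, hd2r⟩ := abs_le.mp hd2
  have hmem1 : e.p₁ ∈ e.pts := ⟨e.h₁, le_refl _, le_of_lt e.hx, e.hy₁⟩
  have hmem2 : e.p₂ ∈ e.pts := ⟨e.h₂, le_of_lt e.hx, le_refl _, e.hy₂⟩
  have part1 : |x - e.p₁ 0| ≤ 1 ∨ |x - e.p₂ 0| ≤ 1 := by
    rcases le_total x (e.p₁ 0 + 1) with h | h
    · exact Or.inl (abs_le.mpr ⟨by linarith, by linarith⟩)
    · exact Or.inr (abs_le.mpr ⟨by linarith, by linarith⟩)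
  refine ⟨part1, ?_⟩
  rcases le_total (e.c 0) x with hcx | hcx
  · -- x to the right of the center: p₂ dominates
    have hp2x : |x - e.p₂ 0| ≤ 1 := abs_le.mpr ⟨by linarith, by linarith⟩
    have hmono : ∀ s ∈ e.pts, |x - s 0| ≤ 1 → fup s x ≤ fup e.p₂ x := by
      intro s hs hsx
      obtain ⟨hsn, hs1, hs2, hs3⟩ := hs
      have hns := norm_sq_aux s e.c hsn
      have hqs : (s 0 - e.c 0) ^ 2 ≤ 1 := by nlinarith [sq_nonneg (s 1 - e.c 1)]
      have hvs := vert_aux s e.c hsn hs3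
      have hv2 := vert_aux e.p₂ e.c e.h₂ e.hy₂
      have hk := key (x - e.c 0) (s 0 - e.c 0) (e.p₂ 0 - e.c 0)
        (by linarith) (by linarith) hqs hq2
        (by rw [show x - e.c 0 - (s 0 - e.c 0) = x - s 0 by ring]; exact hsx)
        (by rw [show x - e.c 0 - (e.p₂ 0 - e.c 0) = x - e.p₂ 0 by ring]; exact hp2x)
      rw [show x - e.c 0 - (s 0 - e.c 0) = x - s 0 by ring,
        show x - e.c 0 - (e.p₂ 0 - e.c 0) = x - e.p₂ 0 by ring] at hk
      unfold fup
      rw [hvs, hv2]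
      linarith
    exact ⟨fun s hs hsx => ⟨e.p₂, Or.inr rfl, hp2x, hmono s hs hsx⟩,
      ⟨e.p₂, Or.inr rfl, hmem2, hp2x, hmono⟩⟩
  · -- x to the left of the center: p₁ dominates
    have hp1x : |x - e.p₁ 0| ≤ 1 := abs_le.mpr ⟨by linarith, by linarith⟩
    have hmono : ∀ s ∈ e.pts, |x - s 0| ≤ 1 → fup s x ≤ fup e.p₁ x := by
      intro s hs hsx
      obtain ⟨hsn, hs1, hs2, hs3⟩ := hs
      have hns := norm_sq_aux s e.c hsn
      have hqs : (s 0 - e.c 0) ^ 2 ≤ 1 := by nlinarith [sq_nonneg (s 1 - e.c 1)]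
      have hvs := vert_aux s e.c hsn hs3
      have hv1 := vert_aux e.p₁ e.c e.h₁ e.hy₁
      have hk := key' (x - e.c 0) (s 0 - e.c 0) (e.p₁ 0 - e.c 0)
        (by linarith) (by linarith) hqs hq1
        (by rw [show x - e.c 0 - (s 0 - e.c 0) = x - s 0 by ring]; exact hsx)
        (by rw [show x - e.c 0 - (e.p₁ 0 - e.c 0) = x - e.p₁ 0 by ring]; exact hp1x)
      rw [show x - e.c 0 - (s 0 - e.c 0) = x - s 0 by ring,
        show x - e.c 0 - (e.p₁ 0 - e.c 0) = x - e.p₁ 0 by ring] at hk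
      unfold fup
      rw [hvs, hv1]
      linarith
    exact ⟨fun s hs hsx => ⟨e.p₁, Or.inl rfl, hp1x, hmono s hs hsx⟩,
      ⟨e.p₁, Or.inl rfl, hmem1, hp1x, hmono⟩⟩
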